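/- Let ∇ be a flat metric connection with skew torsion T on a Riemannian manifold and let 𝒯 be a tensor field that is a (pointwise universal) polynomial expression in T. Then ∇𝒯 = −2∇^g𝒯. In particular 𝒯 is ∇-parallel if and only if it is ∇^g-parallel. -/

import Mathlib

/-- An abstract calculus of vector fields on a Riemannian manifold: `C` is the ring of smooth
functions, `X` the `C`-module of vector fields, `g` the Riemannian metric, `D` the directional
derivative, `bracket` the Lie bracket and `lc` the Levi-Civita connection `∇^g`. -/
structure VectorFieldCalculus (C X : Type*) [CommRing C] [Algebra ℝ C]
    [AddCommGroup X] [Module C X] where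
  g : X → X → C
  D : X → C → C
  bracket : X → X → X
  lc : X → X → X
  g_symm : ∀ a b, g a b = g b a
  g_add_left : ∀ a b c, g (a + b) c = g a c + g b c
  g_smul_left : ∀ (f : C) a b, g (f • a) b = f * g a b
  g_definite : ∀ a, g a a = 0 → a = 0
  D_add : ∀ v f h, D v (f + h) = D v f + D v h
  D_mul : ∀ v f h, D v (f * h) = f * D v h + h * D v f
  D_algebraMap : ∀ v (r : ℝ), D v (algebraMap ℝ C r) = 0
  D_add_vec : ∀ v w f, D (v + w) f = D v f + D w f
  D_smul_vec : ∀ (f : C) v h, D (f • v) h = f * D v h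
  bracket_antisymm : ∀ a b, bracket a b = - bracket b a
  bracket_jacobi : ∀ a b c,
    bracket (bracket a b) c + bracket (bracket b c) a + bracket (bracket c a) b = 0
  bracket_D : ∀ a b f, D (bracket a b) f = D a (D b f) - D b (D a f)
  bracket_leibniz : ∀ a (f : C) b, bracket a (f • b) = D a f • b + f • bracket a b
  lc_add : ∀ z a b, lc z (a + b) = lc z a + lc z b
  lc_smul : ∀ z (f : C) a, lc z (f • a) = D z f • a + f • lc z a
  lc_add_vec : ∀ z w a, lc (z + w) a = lc z a + lc w a
  lc_smul_vec : ∀ (f : C) z a, lc (f • z) a = f • lc z a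
  lc_metric : ∀ z a b, D z (g a b) = g (lc z a) b + g a (lc z b)
  lc_torsion_free : ∀ a b, lc a b - lc b a = bracket a b

/-- A vector field `k` is Killing iff `⟨∇_v k, w⟩ + ⟨∇_w k, v⟩ = 0` for all `v, w`. -/
def VectorFieldCalculus.IsKilling {C X : Type*} [CommRing C] [Algebra ℝ C]
    [AddCommGroup X] [Module C X] (V : VectorFieldCalculus C X) (k : X) : Prop :=
  ∀ v w, V.g (V.lc v k) w + V.g (V.lc w k) v = 0

/-!
Flatness of `∇ = ∇^g + ½T`, written out, says
`R^g(a,b)c + ½((∇^g_a T)(b,c) - (∇^g_b T)(a,c)) + ¼(T(a,T(b,c)) - T(b,T(a,c))) = 0`.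
Summing cyclically over `a, b, c` kills `R^g` by the first Bianchi identity and leaves
that the cyclic sum of `∇^g T` over its first three slots is `½σ_T`. A tensor alternating in
its last three slots is recovered from these cyclic sums, so `∇^g_v T = (1/6) v ⌟ σ_T`.
Directly from `∇ = ∇^g + ½T` one has `∇_v T = ∇^g_v T - ½ v ⌟ σ_T`, hence `∇T = -2∇^g T`,
and `dF` carries this over to `𝒯`.
-/

section CyclicSum
variable {ι M : Type*} [AddCommGroup M]

def cyclicSum (A : ι → ι → ι → ι → M) (a b c d : ι) : M :=
  A a b c d + A b c a d + A c a b d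

theorem three_nsmul_eq_cyclicSum {A : ι → ι → ι → ι → M}
    (h₂₃ : ∀ a b c d, A a c b d = -A a b c d) (h₃₄ : ∀ a b c d, A a b d c = -A a b c d)
    (a b c d : ι) :
    3 • A a b c d = cyclicSum A a b c d + 2 • cyclicSum A b c d a + cyclicSum A c d a b
      - cyclicSum A d a b c := by
  simp only [cyclicSum, h₂₃ b a c d, h₃₄ b c a d, h₂₃ c b d a, h₃₄ c b a d, h₂₃ c a b d,
    h₃₄ d b a c, h₂₃ d a b c, h₂₃ c a d b, h₃₄ c a b d, h₃₄ d a b c, h₂₃ a d c b, h₃₄ a d b c,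
    h₂₃ a b d c, h₃₄ a b c d, h₂₃ b a d c, h₃₄ b a c d]
  abel

end CyclicSum

theorem two_mul_algebraMap_half {C : Type*} [CommRing C] [Algebra ℝ C] :
    2 * algebraMap ℝ C (1/2) = 1 := by
  rw [← map_ofNat (algebraMap ℝ C) 2, ← map_mul]
  norm_num

namespace VectorFieldCalculus

variable {C X : Type*} [CommRing C] [Algebra ℝ C] [AddCommGroup X] [Module C X]
  (V : VectorFieldCalculus C X)

theorem g_zero_left (b : X) : V.g 0 b = 0 :=
  (AddMonoidHom.mk' (V.g · b) (V.g_add_left · · b)).map_zero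

theorem g_sub_left (a a' b : X) : V.g (a - a') b = V.g a b - V.g a' b :=
  (AddMonoidHom.mk' (V.g · b) (V.g_add_left · · b)).map_sub a a'

theorem g_neg_left (a b : X) : V.g (-a) b = -V.g a b :=
  (AddMonoidHom.mk' (V.g · b) (V.g_add_left · · b)).map_neg a

theorem g_add_right (a b b' : X) : V.g a (b + b') = V.g a b + V.g a b' := by
  rw [V.g_symm, V.g_add_left, V.g_symm b, V.g_symm b']

theorem g_smul_right (f : C) (a b : X) : V.g a (f • b) = f * V.g a b := by
  rw [V.g_symm, V.g_smul_left, V.g_symm]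

theorem g_neg_right (a b : X) : V.g a (-b) = -V.g a b := by
  rw [V.g_symm, g_neg_left, V.g_symm]

theorem eq_of_forall_g {x y : X} (h : ∀ c, V.g x c = V.g y c) : x = y :=
  sub_eq_zero.mp <| V.g_definite _ <| by rw [g_sub_left, h, sub_self]

theorem D_neg (v : X) (f : C) : V.D v (-f) = -V.D v f :=
  (AddMonoidHom.mk' (V.D v) (V.D_add v)).map_neg f

theorem lc_sub_right (z a b : X) : V.lc z (a - b) = V.lc z a - V.lc z b :=
  (AddMonoidHom.mk' (V.lc z) (V.lc_add z)).map_sub a b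

theorem lc_sub_left (z w a : X) : V.lc (z - w) a = V.lc z a - V.lc w a :=
  (AddMonoidHom.mk' (V.lc · a) (V.lc_add_vec · · a)).map_sub z w

theorem lc_algebraMap_smul (z : X) (r : ℝ) (a : X) :
    V.lc z (algebraMap ℝ C r • a) = algebraMap ℝ C r • V.lc z a := by
  rw [V.lc_smul, V.D_algebraMap, zero_smul, zero_add]

def curvature (a b c : X) : X :=
  V.lc a (V.lc b c) - V.lc b (V.lc a c) - V.lc (V.bracket a b) c

theorem curvature_cyclic_sum (a b c : X) :
    V.curvature a b c + V.curvature b c a + V.curvature c a b = 0 := by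
  have htwice : ∀ x y z, V.lc x (V.lc y z) - V.lc x (V.lc z y) - V.lc (V.bracket y z) x
      = -V.bracket (V.bracket y z) x := by
    intro x y z
    rw [← lc_sub_right, V.lc_torsion_free, V.lc_torsion_free x, V.bracket_antisymm x]
  calc _ = -V.bracket (V.bracket a b) c + -V.bracket (V.bracket b c) a
        + -V.bracket (V.bracket c a) b := by
          rw [← htwice c a b, ← htwice a b c, ← htwice b c a]
          simp only [curvature]
          abel
    _ = 0 := by rw [← neg_add, ← neg_add, V.bracket_jacobi, neg_zero]

structure IsSkewTorsion (t : X → X → X) : Prop where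
  g_swap_left : ∀ a b c, V.g (t a b) c = -V.g (t b a) c
  g_swap_right : ∀ a b c, V.g (t a b) c = -V.g (t a c) b

def torsionForm (t : X → X → X) (a b c : X) : C := V.g (t a b) c

def covDerivForm (m : X → X → X) (T : X → X → X → C) (v a b c : X) : C :=
  V.D v (T a b c) - T (m v a) b c - T a (m v b) c - T a b (m v c)

def covDerivTorsion (t : X → X → X) (a b c : X) : X :=
  V.lc a (t b c) - t (V.lc a b) c - t b (V.lc a c)

def torsionSigma (t : X → X → X) (a b c d : X) : C :=
  V.g (t a b) (t c d) + V.g (t b c) (t a d) + V.g (t c a) (t b d)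

theorem g_covDerivTorsion (t : X → X → X) (a b c d : X) :
    V.g (V.covDerivTorsion t a b c) d = V.covDerivForm V.lc (V.torsionForm t) a b c d := by
  rw [covDerivTorsion, g_sub_left, g_sub_left, covDerivForm, torsionForm, V.lc_metric]
  simp only [torsionForm]
  ring

namespace IsSkewTorsion

variable {V} {t : X → X → X} (ht : V.IsSkewTorsion t)
include ht

theorem swap (a b : X) : t a b = -t b a :=
  V.eq_of_forall_g fun c => by rw [g_neg_left, ht.g_swap_left]

theorem add_right (a x y : X) : t a (x + y) = t a x + t a y :=
  V.eq_of_forall_g fun c => by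
    rw [V.g_add_left, ht.g_swap_right, ht.g_swap_right a x, ht.g_swap_right a y, g_add_right]
    ring

theorem smul_right (f : C) (a x : X) : t a (f • x) = f • t a x :=
  V.eq_of_forall_g fun c => by
    rw [V.g_smul_left, ht.g_swap_right, ht.g_swap_right a x, g_smul_right]
    ring

theorem add_left (x y a : X) : t (x + y) a = t x a + t y a := by
  rw [ht.swap (x + y), ht.add_right, ht.swap x, ht.swap y, neg_add]

theorem sub_left (x y a : X) : t (x - y) a = t x a - t y a :=
  (AddMonoidHom.mk' (t · a) (ht.add_left · · a)).map_sub x y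

theorem smul_left (f : C) (x a : X) : t (f • x) a = f • t x a := by
  rw [ht.swap (f • x), ht.smul_right, ht.swap x, smul_neg]

theorem g_cyclic (x y z : X) : V.g (t x y) z = V.g (t y z) x := by
  rw [ht.g_swap_left, ht.g_swap_right, neg_neg]

theorem covDerivForm_swap₁₂ (m : X → X → X) (v a b c : X) :
    V.covDerivForm m (V.torsionForm t) v b a c = -V.covDerivForm m (V.torsionForm t) v a b c := by
  simp only [covDerivForm, torsionForm, ht.g_swap_left b a c, ht.g_swap_left (m v b) a c,
    ht.g_swap_left b (m v a) c, ht.g_swap_left b a (m v c), D_neg]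
  ring

theorem covDerivForm_swap₂₃ (m : X → X → X) (v a b c : X) :
    V.covDerivForm m (V.torsionForm t) v a c b = -V.covDerivForm m (V.torsionForm t) v a b c := by
  simp only [covDerivForm, torsionForm, ht.g_swap_right a c b, ht.g_swap_right (m v a) c b,
    ht.g_swap_right a (m v c) b, ht.g_swap_right a c (m v b), D_neg]
  ring

theorem torsionSigma_swap₁₂ (a b c d : X) : V.torsionSigma t b a c d =
    -V.torsionSigma t a b c d := by
  simp only [torsionSigma, ht.swap b a, ht.swap a c, ht.swap c b, g_neg_left]
  ring

theorem torsionSigma_swap₂₃ (a b c d : X) : V.torsionSigma t a c b d =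
    -V.torsionSigma t a b c d := by
  simp only [torsionSigma, ht.swap a c, ht.swap c b, ht.swap b a, g_neg_left]
  ring

theorem torsionSigma_swap₃₄ (a b c d : X) : V.torsionSigma t a b d c =
    -V.torsionSigma t a b c d := by
  simp only [torsionSigma, ht.swap d c, ht.swap a c, ht.swap d a, g_neg_left, g_neg_right]
  linear_combination V.g_symm (t c a) (t b d) - V.g_symm (t a d) (t b c)

section SkewTorsionConnection

variable {nab : X → X → X}
  (hnab : ∀ a b, nab a b = V.lc a b + algebraMap ℝ C (1/2) • t a b)
include hnab

theorem covDerivForm_eq_sub_half_mul_torsionSigma (v a b c : X) :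
    V.covDerivForm nab (V.torsionForm t) v a b c
      = V.covDerivForm V.lc (V.torsionForm t) v a b c
        - algebraMap ℝ C (1/2) * V.torsionSigma t v a b c := by
  simp only [covDerivForm, torsionForm, torsionSigma, hnab, ht.add_left, ht.smul_left,
    ht.add_right, ht.smul_right, V.g_add_left, V.g_smul_left, g_add_right, g_smul_right]
  have h₁ : V.g (t (t v a) b) c = V.g (t v a) (t b c) := by
    rw [ht.g_cyclic, V.g_symm]
  have h₂ : V.g (t a (t v b)) c = V.g (t b v) (t a c) := by
    rw [ht.g_cyclic, ht.g_cyclic, ht.swap b v, ht.swap a c, g_neg_left, g_neg_right, neg_neg,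
      V.g_symm]
  rw [h₁, h₂]
  ring

theorem curvature_of_add_half_torsion (a b c : X) :
    nab a (nab b c) - nab b (nab a c) - nab (V.bracket a b) c
      = V.curvature a b c
        + algebraMap ℝ C (1/2) • (V.covDerivTorsion t a b c - V.covDerivTorsion t b a c)
        + algebraMap ℝ C (1/2) • algebraMap ℝ C (1/2) • (t a (t b c) - t b (t a c)) := by
  simp only [hnab, curvature, covDerivTorsion]
  rw [← V.lc_torsion_free a b]
  simp only [V.lc_add, lc_algebraMap_smul, ht.add_right, ht.smul_right, ht.sub_left, lc_sub_left]
  module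

variable (hflat : ∀ a b c, nab a (nab b c) - nab b (nab a c) - nab (V.bracket a b) c = 0)
include hflat

theorem two_mul_cyclicSum_covDerivForm (a b c d : X) :
    2 * cyclicSum (V.covDerivForm V.lc (V.torsionForm t)) a b c d = V.torsionSigma t a b c d := by
  set G := V.covDerivForm V.lc (V.torsionForm t)
  set h := algebraMap ℝ C (1/2)
  have flat : ∀ x y z, V.g (V.curvature x y z) d + h * (G x y z d - G y x z d)
      - h * h * (V.g (t x d) (t y z) - V.g (t y d) (t x z)) = 0 := by
    intro x y z
    have H := congrArg (V.g · d)
      ((ht.curvature_of_add_half_torsion hnab x y z).symm.trans (hflat x y z))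
    simp only [V.g_add_left, g_sub_left, V.g_smul_left, g_covDerivTorsion, g_zero_left] at H
    rw [ht.g_swap_right x, ht.g_swap_right y] at H
    linear_combination H
  have hR : V.g (V.curvature a b c) d + V.g (V.curvature b c a) d
      + V.g (V.curvature c a b) d = 0 := by
    rw [← V.g_add_left, ← V.g_add_left, V.curvature_cyclic_sum, g_zero_left]
  have hE : h * (2 * cyclicSum G a b c d) - h * h * (2 * V.torsionSigma t a b c d) = 0 := by
    have h₁ := flat a b c
    have h₂ := flat b c a
    have h₃ := flat c a b
    simp only [ht.swap a c, ht.swap b a, ht.swap c b, g_neg_right] at h₁ h₂ h₃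
    simp only [cyclicSum, torsionSigma]
    linear_combination h₁ + h₂ + h₃ - hR
      + h * (ht.covDerivForm_swap₁₂ V.lc b a c d + ht.covDerivForm_swap₁₂ V.lc c a b d
        + ht.covDerivForm_swap₁₂ V.lc a b c d)
      - 2 * h * h * (V.g_symm (t a b) (t c d) + V.g_symm (t b c) (t a d)
        + V.g_symm (t c a) (t b d))
  linear_combination 2 * hE
    - (2 * cyclicSum G a b c d - (1 + 2 * h) * V.torsionSigma t a b c d)
      * two_mul_algebraMap_half (C := C)

theorem six_mul_covDerivForm (v a b c : X) :
    6 * V.covDerivForm V.lc (V.torsionForm t) v a b c = V.torsionSigma t v a b c := by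
  have hinv := three_nsmul_eq_cyclicSum (ht.covDerivForm_swap₁₂ V.lc)
    (ht.covDerivForm_swap₂₃ V.lc) v a b c
  rw [nsmul_eq_mul, Nat.cast_ofNat] at hinv
  have s₁ : V.torsionSigma t a b c v = -V.torsionSigma t v a b c := by
    rw [ht.torsionSigma_swap₃₄ a b v c, ht.torsionSigma_swap₂₃ a v b c,
      ht.torsionSigma_swap₁₂ v a b c, neg_neg]
  have s₂ : V.torsionSigma t b c v a = V.torsionSigma t v a b c := by
    rw [ht.torsionSigma_swap₂₃ b v c a, ht.torsionSigma_swap₁₂ v b c a,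
      ht.torsionSigma_swap₃₄ v b a c, ht.torsionSigma_swap₂₃ v a b c, neg_neg, neg_neg]
  have s₃ : V.torsionSigma t c v a b = -V.torsionSigma t v a b c := by
    rw [ht.torsionSigma_swap₁₂ v c a b, ht.torsionSigma_swap₂₃ v a c b,
      ht.torsionSigma_swap₃₄ v a b c, neg_neg]
  have hc := ht.two_mul_cyclicSum_covDerivForm hnab hflat
  linear_combination 2 * hinv + hc v a b c + 2 * hc a b c v + hc b c v a - hc c v a b
    + 2 * s₁ + s₂ - s₃

theorem covDerivForm_eq_neg_two_mul (v a b c : X) :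
    V.covDerivForm nab (V.torsionForm t) v a b c
      = -2 * V.covDerivForm V.lc (V.torsionForm t) v a b c := by
  rw [ht.covDerivForm_eq_sub_half_mul_torsionSigma hnab, ← ht.six_mul_covDerivForm hnab hflat]
  linear_combination
    -3 * V.covDerivForm V.lc (V.torsionForm t) v a b c * two_mul_algebraMap_half (C := C)

end SkewTorsionConnection

end IsSkewTorsion

end VectorFieldCalculus

/-- Let `∇ = ∇^g + (1/2)T` be a flat metric connection with skew torsion
and let `𝒯` be a tensor field that is a pointwise universal polynomial in `T`: its
`∇`- resp. `∇^g`-covariant derivatives in direction `v` are obtained by applying one and the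
same linear map `dF` (the derivative of the polynomial at `T`) to `∇_v T` resp. `∇^g_v T`.
Then `∇𝒯 = -2 ∇^g𝒯`; in particular `𝒯` is `∇`-parallel iff it is `∇^g`-parallel. -/
theorem tensor_polynomial_derivative {C X W : Type*} [CommRing C] [Algebra ℝ C]
    [AddCommGroup X] [Module C X] [AddCommGroup W] [Module ℝ W]
    (V : VectorFieldCalculus C X)
    (t : X → X → X)
    (hskew1 : ∀ a b c, V.g (t a b) c = - V.g (t b a) c)
    (hskew2 : ∀ a b c, V.g (t a b) c = - V.g (t a c) b)
    (nab : X → X → X)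
    (hnab : ∀ a b, nab a b = V.lc a b + algebraMap ℝ C (1/2) • t a b)
    (hflat : ∀ a b c, nab a (nab b c) - nab b (nab a c) - nab (V.bracket a b) c = 0)
    -- the 3-form T and its covariant derivative with respect to a connection m
    (T : X → X → X → C) (hT : ∀ a b c, T a b c = V.g (t a b) c)
    (covT : (X → X → X) → X → X → X → X → C)
    (hcovT : ∀ m v a b c, covT m v a b c
      = V.D v (T a b c) - T (m v a) b c - T a (m v b) c - T a b (m v c))
    -- the derivatives of the tensor polynomial 𝒯 = F(T) in direction v
    (dF : (X → X → X → C) → W) (hdF : IsLinearMap ℝ dF)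
    (nablaTau nablagTau : X → W)
    (h1 : ∀ v, nablaTau v = dF (covT nab v))
    (h2 : ∀ v, nablagTau v = dF (covT V.lc v)) :
    (∀ v, nablaTau v = (-2 : ℝ) • nablagTau v)
    ∧ ((∀ v, nablaTau v = 0) ↔ (∀ v, nablagTau v = 0)) := by
  have ht : V.IsSkewTorsion t := ⟨hskew1, hskew2⟩
  obtain rfl : T = V.torsionForm t := by
    funext a b c
    exact hT a b c
  have hcov : ∀ m, covT m = V.covDerivForm m (V.torsionForm t) := fun m => by
    funext v a b c
    exact hcovT m v a b c
  have hcov_nab : ∀ v, covT nab v = (-2 : ℝ) • covT V.lc v := fun v => by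
    funext a b c
    rw [hcov, hcov, Pi.smul_apply, Pi.smul_apply, Pi.smul_apply,
      ht.covDerivForm_eq_neg_two_mul hnab hflat, Algebra.smul_def, map_neg, map_ofNat]
  have hmain : ∀ v, nablaTau v = (-2 : ℝ) • nablagTau v := fun v => by
    rw [h1, h2, hcov_nab, hdF.map_smul]
  refine ⟨hmain, forall_congr' fun v => ?_⟩
  rw [hmain, smul_eq_zero_iff_right (by norm_num)]
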